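/- arXiv:1805.03847 — 2 statements merged into one kernel-verified Lean document; each statement's English description precedes it below -/
import Mathlib

section
/- Let Γ ⊆ ℝⁿ be open and convex, S ⊆ Γ convex, f : Γ → ℝ continuously differentiable and quasiconvex. Let x̄ be a global minimizer of f on S with ∇f(x̄) ≠ 0. Then the solution set S̄ equals the set Ŝ₂ = {x ∈ S | ⟨∇f(x̄), x − x̄⟩ ≤ 0, ∇f(x) ≠ 0, and ∇f(x)/‖∇f(x)‖ = ∇f(x̄)/‖∇f(x̄)‖}. -/
/-!
Let `x̄` minimize `f` on `S`, with `g = ∇f(x̄) ≠ 0`. Quasiconvexity gives the first-order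
condition `f z ≤ f p → ⟪∇f p, z - p⟫ ≤ 0` and, when `∇f p ≠ 0`, its strict version
`f z < f p → ⟪∇f p, z - p⟫ < 0` (perturb `z` along `∇f p`). By the latter, a point `u ∈ S`
whose gradient points along `g`, with `⟪g, u - x̄⟫ ≤ 0`, cannot lie above the level `f x̄`.

Conversely, for a minimizer `u`, `f` is constant on `[x̄, u]`, so `g ⊥ u - x̄` and
`∇f u ⊥ x̄ - u`. Points `x̄ + σ v` with `⟪g, v⟫ < 0` lie strictly below the level, so the
first-order condition at `u` gives `⟪∇f u, v⟫ ≤ 0` for all such `v`: `∇f u` is a nonnegative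
multiple of `g`. Finally `∇f u ≠ 0`: pick `y = x̄ + t (u - x̄)` close to `x̄`, so that
`⟪∇f y, g⟫ > 0`. The point `y + r t g` lies on the segment from `x̄` to `u + r g`, hence
`f (y + r t g) ≤ max (f x̄) (f (u + r g))`; the left side leaves the level at rate
`t ⟪∇f y, g⟫ > 0` as `r → 0⁺`, so `f (u + r g)` does too, which is impossible if `∇f u = 0`.
-/

open Set Filter Topology
open scoped Gradient RealInnerProductSpace

section DerivSign

variable {φ : ℝ → ℝ} {m x : ℝ}

lemma HasDerivAt.eventually_nhdsGT_lt (hφ : HasDerivAt φ m x) (hm : m < 0) :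
    ∀ᶠ t in 𝓝[>] x, φ t < φ x := by
  have hslope : Tendsto (slope φ x) (𝓝[>] x) (𝓝 m) :=
    (hasDerivAt_iff_tendsto_slope.mp hφ).mono_left (nhdsWithin_mono _ fun t ht => ne_of_gt ht)
  filter_upwards [hslope.eventually_lt_const hm, self_mem_nhdsWithin] with t hneg hxt
  rw [slope_def_field, div_lt_iff₀ (sub_pos.2 hxt)] at hneg
  linarith

lemma HasDerivAt.nonpos_of_eventually_nhdsGT_le (hφ : HasDerivAt φ m x)
    (h : ∀ᶠ t in 𝓝[>] x, φ t ≤ φ x) : m ≤ 0 := by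
  by_contra! hm
  obtain ⟨t, hlt, hle⟩ := ((hφ.neg.eventually_nhdsGT_lt (neg_lt_zero.2 hm)).and h).exists
  exact (neg_lt_neg_iff.1 hlt).not_ge hle

end DerivSign

section Quasiconvex

variable {E : Type*} [AddCommGroup E] [Module ℝ E] {s : Set E} {f : E → ℝ} {p q : E}

lemma quasiconvexOn_of_le_max_add_smul_sub (hs : Convex ℝ s)
    (h : ∀ x ∈ s, ∀ y ∈ s, ∀ t ∈ Icc (0 : ℝ) 1, f (x + t • (y - x)) ≤ max (f x) (f y)) :
    QuasiconvexOn ℝ s f := by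
  refine quasiconvexOn_iff_le_max.2 ⟨hs, fun x hx y hy a b _ hb hab => ?_⟩
  obtain rfl : a = 1 - b := by linarith
  rw [show (1 - b) • x + b • y = x + b • (y - x) by module]
  exact h x hx y hy b ⟨hb, by linarith⟩

namespace QuasiconvexOn

lemma subset {t : Set E} (hf : QuasiconvexOn ℝ s f) (hts : t ⊆ s) (ht : Convex ℝ t) :
    QuasiconvexOn ℝ t f :=
  quasiconvexOn_iff_le_max.2 ⟨ht, fun _ hx _ hy _ _ ha hb hab =>
    (quasiconvexOn_iff_le_max.1 hf).2 (hts hx) (hts hy) ha hb hab⟩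

lemma le_max_add_smul_sub (hf : QuasiconvexOn ℝ s f) (hp : p ∈ s) (hq : q ∈ s) {t : ℝ}
    (ht : t ∈ Icc (0 : ℝ) 1) : f (p + t • (q - p)) ≤ max (f p) (f q) := by
  rw [show p + t • (q - p) = (1 - t) • p + t • q by module]
  exact (quasiconvexOn_iff_le_max.1 hf).2 hp hq (sub_nonneg.2 ht.2) ht.1 (by ring)

lemma eq_of_isMinOn (hf : QuasiconvexOn ℝ s f) (hmin : IsMinOn f s p) (hp : p ∈ s) (hq : q ∈ s)
    (hfq : f q ≤ f p) : ∀ t ∈ Icc (0 : ℝ) 1, f (p + t • (q - p)) = f p := fun _ ht =>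
  le_antisymm (by simpa [max_eq_left hfq] using hf.le_max_add_smul_sub hp hq ht)
    (hmin (hf.convex.add_smul_sub_mem hp hq ht))

end QuasiconvexOn

end Quasiconvex

section InnerProductSpace

variable {E : Type*} [NormedAddCommGroup E] [InnerProductSpace ℝ E]

lemma eventually_nhdsGT_zero_add_smul {P : E → Prop} {u : E} (h : ∀ᶠ y in 𝓝 u, P y) (v : E) :
    ∀ᶠ r in 𝓝[>] (0 : ℝ), P (u + r • v) := by
  have hline : Tendsto (fun r : ℝ => u + r • v) (𝓝 0) (𝓝 u) := by
    have hc : Continuous fun r : ℝ => u + r • v := by fun_prop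
    simpa using hc.tendsto 0
  exact nhdsWithin_le_nhds (hline.eventually h)

lemma sameRay_of_forall_inner_neg {g h : E} (hg : g ≠ 0) (H : ∀ v, ⟪g, v⟫ < 0 → ⟪h, v⟫ ≤ 0) :
    SameRay ℝ g h := by
  have hg2 : 0 < ‖g‖ ^ 2 := by positivity
  -- `v - ε g` satisfies the strict hypothesis and tends to `v` as `ε → 0⁺`
  have hclosed : ∀ v, ⟪g, v⟫ ≤ 0 → ⟪h, v⟫ ≤ 0 := fun v hv => by
    have hlim : Tendsto (fun ε : ℝ => ⟪h, v - ε • g⟫) (𝓝[>] 0) (𝓝 ⟪h, v⟫) := by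
      have hc : Continuous fun ε : ℝ => ⟪h, v - ε • g⟫ := by fun_prop
      simpa using (hc.tendsto 0).mono_left nhdsWithin_le_nhds
    refine le_of_tendsto hlim (eventually_nhdsWithin_of_forall fun ε (hε : 0 < ε) => H _ ?_)
    rw [inner_sub_right, real_inner_smul_right, real_inner_self_eq_norm_sq]
    nlinarith
  have hhg : 0 ≤ ⟪h, g⟫ := by
    have := hclosed (-g) (by rw [inner_neg_right, neg_nonpos]; exact real_inner_self_nonneg)
    rwa [inner_neg_right, neg_nonpos] at this
  set c := ⟪h, g⟫ / ‖g‖ ^ 2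
  have horth : ⟪g, h - c • g⟫ = 0 := by
    rw [inner_sub_right, real_inner_smul_right, real_inner_self_eq_norm_sq, real_inner_comm,
      div_mul_cancel₀ _ hg2.ne', sub_self]
  have hproj : h - c • g = 0 := by
    rw [← real_inner_self_nonpos, inner_sub_left, real_inner_smul_left, horth, mul_zero, sub_zero]
    exact hclosed _ horth.le
  rw [sub_eq_zero.1 hproj]
  exact SameRay.sameRay_nonneg_smul_right g (div_nonneg hhg hg2.le)

lemma SameRay.inner_nonneg_of_inner_nonneg {a b v : E} (h : SameRay ℝ a b) (hb : b ≠ 0)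
    (hv : 0 ≤ ⟪b, v⟫) : 0 ≤ ⟪a, v⟫ := by
  obtain ⟨r, hr, rfl⟩ := h.symm.exists_nonneg_left hb
  rw [real_inner_smul_left]
  exact mul_nonneg hr hv

variable [CompleteSpace E] {s : Set E} {f : E → ℝ} {p q v x : E}

lemma hasDerivAt_add_smul (hf : DifferentiableAt ℝ f p) :
    HasDerivAt (fun t : ℝ => f (p + t • v)) ⟪∇ f p, v⟫ 0 := by
  have hline : HasDerivAt (fun t : ℝ => p + t • v) v 0 := by
    simpa using ((hasDerivAt_id (0 : ℝ)).smul_const v).const_add p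
  have hcomp := hf.hasFDerivAt.comp_hasDerivAt_of_eq (0 : ℝ) hline (by simp)
  rwa [hf.hasGradientAt.fderiv_apply] at hcomp

lemma inner_gradient_eq_zero_of_forall_eq (hf : DifferentiableAt ℝ f p)
    (h : ∀ t ∈ Icc (0 : ℝ) 1, f (p + t • v) = f p) : ⟪∇ f p, v⟫ = 0 := by
  have hconst : ∀ᶠ t in 𝓝[>] (0 : ℝ), f (p + t • v) = f (p + (0 : ℝ) • v) := by
    filter_upwards [Ioc_mem_nhdsGT one_pos] with t ht
    rw [h t ⟨ht.1.le, ht.2⟩, zero_smul, add_zero]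
  have hd := hasDerivAt_add_smul (v := v) hf
  refine le_antisymm (hd.nonpos_of_eventually_nhdsGT_le (hconst.mono fun _ ht => ht.le)) ?_
  exact neg_nonpos.1 (hd.neg.nonpos_of_eventually_nhdsGT_le
    (hconst.mono fun _ ht => neg_le_neg ht.ge))

lemma ContDiffOn.continuousOn_gradient (hf : ContDiffOn ℝ 1 f s) (hs : IsOpen s) :
    ContinuousOn (∇ f) s :=
  (InnerProductSpace.toDual ℝ E).symm.continuous.comp_continuousOn
    (hf.continuousOn_fderiv_of_isOpen hs le_rfl)

namespace QuasiconvexOn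

lemma inner_gradient_nonpos (hf : QuasiconvexOn ℝ s f) (hd : DifferentiableAt ℝ f p)
    (hp : p ∈ s) (hq : q ∈ s) (hfq : f q ≤ f p) : ⟪∇ f p, q - p⟫ ≤ 0 := by
  refine (hasDerivAt_add_smul hd).nonpos_of_eventually_nhdsGT_le ?_
  filter_upwards [Ioc_mem_nhdsGT one_pos] with t ht
  simpa [max_eq_left hfq] using hf.le_max_add_smul_sub hp hq ⟨ht.1.le, ht.2⟩

lemma inner_gradient_neg (hf : QuasiconvexOn ℝ s f) (hd : DifferentiableAt ℝ f p) (hp : p ∈ s)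
    (hq : s ∈ 𝓝 q) (hcont : ContinuousAt f q) (hg : ∇ f p ≠ 0) (hfq : f q < f p) :
    ⟪∇ f p, q - p⟫ < 0 := by
  -- push `q` a little along `∇f p` while staying strictly below the level `f p`
  have hbelow : ∀ᶠ z in 𝓝 q, z ∈ s ∧ f z < f p :=
    (eventually_mem_set.2 hq).and (hcont.eventually (gt_mem_nhds hfq))
  obtain ⟨r, ⟨hrs, hrlt⟩, hr⟩ :=
    ((eventually_nhdsGT_zero_add_smul hbelow (∇ f p)).and self_mem_nhdsWithin).exists
  have hle := hf.inner_gradient_nonpos hd hp hrs hrlt.le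
  rw [show q + r • ∇ f p - p = (q - p) + r • ∇ f p by abel, inner_add_right,
    real_inner_smul_right, real_inner_self_eq_norm_sq] at hle
  have hpos : 0 < r * ‖∇ f p‖ ^ 2 := mul_pos hr (by positivity)
  linarith

lemma sameRay_gradient (hf : QuasiconvexOn ℝ s f) (hdp : DifferentiableAt ℝ f p)
    (hdq : DifferentiableAt ℝ f q) (hp : s ∈ 𝓝 p) (hq : q ∈ s) (hfpq : f p ≤ f q)
    (horth : ⟪∇ f q, p - q⟫ = 0) (hg : ∇ f p ≠ 0) : SameRay ℝ (∇ f p) (∇ f q) := by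
  refine sameRay_of_forall_inner_neg hg fun v hv => ?_
  obtain ⟨σ, ⟨hσs, hσlt⟩, hσ⟩ := (((eventually_nhdsGT_zero_add_smul (eventually_mem_set.2 hp) v).and
    ((hasDerivAt_add_smul hdp).eventually_nhdsGT_lt hv)).and self_mem_nhdsWithin).exists
  have hfσ : f (p + σ • v) < f p := by simpa using hσlt
  have hle := hf.inner_gradient_nonpos hdq hq hσs (hfσ.le.trans hfpq)
  rw [show p + σ • v - q = (p - q) + σ • v by abel, inner_add_right, horth, zero_add,
    real_inner_smul_right] at hle
  exact nonpos_of_mul_nonpos_left (by linarith) hσ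

lemma gradient_ne_zero_of_forall_eq (hf : QuasiconvexOn ℝ s f) (hs : IsOpen s)
    (hC1 : ContDiffOn ℝ 1 f s) (hp : p ∈ s) (hx : x ∈ s) (hg : ∇ f p ≠ 0)
    (hconst : ∀ t ∈ Icc (0 : ℝ) 1, f (p + t • (x - p)) = f p) : ∇ f x ≠ 0 := by
  intro hx0
  set g := ∇ f p
  have hdiff : ∀ y ∈ s, DifferentiableAt ℝ f y := fun y hy =>
    (hC1.differentiableOn one_ne_zero).differentiableAt (hs.mem_nhds hy)
  have hnear : ∀ᶠ y in 𝓝 p, y ∈ s ∧ 0 < ⟪∇ f y, g⟫ := by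
    have hcont : ContinuousAt (fun y => ⟪∇ f y, g⟫) p :=
      ((hC1.continuousOn_gradient hs).continuousAt (hs.mem_nhds hp)).inner continuousAt_const
    exact (hs.eventually_mem hp).and
      (hcont.eventually (lt_mem_nhds (real_inner_self_pos.2 hg)))
  obtain ⟨t, ⟨⟨hys, hyg⟩, -, ht1⟩, ht0⟩ := (((eventually_nhdsGT_zero_add_smul hnear (x - p)).and
    (Ioc_mem_nhdsGT one_pos)).and self_mem_nhdsWithin).exists
  set y := p + t • (x - p)
  have hfy : f y = f p := hconst t ⟨ht0.le, ht1⟩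
  have hfx : f x = f p := by simpa using hconst 1 ⟨zero_le_one, le_rfl⟩
  -- `y + r • (t • g)` lies on the segment from `p` to `x + r • g`
  have hφ : HasDerivAt (fun r : ℝ => f (y + r • (t • g))) ⟪∇ f y, t • g⟫ 0 :=
    hasDerivAt_add_smul (hdiff y hys)
  have hχ : HasDerivAt (fun r : ℝ => f (x + r • g)) 0 0 := by
    simpa [hx0] using hasDerivAt_add_smul (v := g) (hdiff x hx)
  have hrise : ∀ᶠ r in 𝓝[>] (0 : ℝ), f p < f (y + r • (t • g)) := by
    have hneg : -⟪∇ f y, t • g⟫ < 0 := by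
      rw [real_inner_smul_right, neg_lt_zero]; exact mul_pos ht0 hyg
    filter_upwards [hφ.neg.eventually_nhdsGT_lt hneg] with r hr
    simpa [hfy] using hr
  have hbelow : ∀ᶠ r in 𝓝[>] (0 : ℝ),
      f (y + r • (t • g)) - f (x + r • g) ≤ f (y + (0 : ℝ) • (t • g)) - f (x + (0 : ℝ) • g) := by
    filter_upwards [hrise, eventually_nhdsGT_zero_add_smul (hs.eventually_mem hx) g]
      with r hr hxr
    have hmax := hf.le_max_add_smul_sub hp hxr ⟨ht0.le, ht1⟩
    rw [show p + t • (x + r • g - p) = y + r • (t • g) by module] at hmax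
    have hle : f (y + r • (t • g)) ≤ f (x + r • g) := (le_max_iff.1 hmax).resolve_left hr.not_ge
    simp only [zero_smul, add_zero, hfy, hfx]
    linarith
  have hslope := (hφ.sub hχ).nonpos_of_eventually_nhdsGT_le hbelow
  rw [real_inner_smul_right, sub_zero] at hslope
  exact (mul_pos ht0 hyg).not_ge hslope

end QuasiconvexOn

end InnerProductSpace

theorem stmt_7 {n : ℕ} (Γ S : Set (EuclideanSpace ℝ (Fin n)))
    (hΓo : IsOpen Γ) (hΓ : Convex ℝ Γ) (hS : Convex ℝ S) (hSΓ : S ⊆ Γ)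
    (f : EuclideanSpace ℝ (Fin n) → ℝ)
    (hC1 : ContDiffOn ℝ 1 f Γ)
    (hqc : ∀ x ∈ Γ, ∀ y ∈ Γ, ∀ t ∈ Set.Icc (0:ℝ) 1,
        f (x + t • (y - x)) ≤ max (f x) (f y))
    (Sbar : Set (EuclideanSpace ℝ (Fin n)))
    (hSbar : Sbar = {x ∈ S | ∀ y ∈ S, f x ≤ f y})
    (xb : EuclideanSpace ℝ (Fin n)) (hxb : xb ∈ Sbar)
    (hgxb : gradient f xb ≠ 0) :
    Sbar = {x ∈ S | (inner ℝ (gradient f xb) (x - xb) : ℝ) ≤ 0 ∧ gradient f x ≠ 0 ∧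
      ‖gradient f x‖⁻¹ • gradient f x = ‖gradient f xb‖⁻¹ • gradient f xb} := by
  have hf := quasiconvexOn_of_le_max_add_smul_sub hΓ hqc
  have hdiff : ∀ y ∈ Γ, DifferentiableAt ℝ f y := fun y hy =>
    (hC1.differentiableOn one_ne_zero).differentiableAt (hΓo.mem_nhds hy)
  subst hSbar
  obtain ⟨hxbS, hxbmin⟩ := hxb
  have hxbΓ := hSΓ hxbS
  ext u
  refine ⟨fun ⟨huS, humin⟩ => ?_, fun ⟨huS, hle, hgu, hdir⟩ => ⟨huS, fun y hy => ?_⟩⟩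
  · have huΓ := hSΓ huS
    have hseg := (hf.subset hSΓ hS).eq_of_isMinOn hxbmin hxbS huS (humin xb hxbS)
    have hseg' := (hf.subset hSΓ hS).eq_of_isMinOn humin huS hxbS (hxbmin u huS)
    have hgu := hf.gradient_ne_zero_of_forall_eq hΓo hC1 hxbΓ huΓ hgxb hseg
    have hray := hf.sameRay_gradient (hdiff xb hxbΓ) (hdiff u huΓ) (hΓo.mem_nhds hxbΓ) huΓ
      (hxbmin u huS) (inner_gradient_eq_zero_of_forall_eq (hdiff u huΓ) hseg') hgxb
    exact ⟨huS, (inner_gradient_eq_zero_of_forall_eq (hdiff xb hxbΓ) hseg).le, hgu,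
      ((sameRay_iff_inv_norm_smul_eq_of_ne hgxb hgu).1 hray).symm⟩
  · refine le_trans (not_lt.1 fun hlt => ?_) (hxbmin y hy)
    have hray : SameRay ℝ (gradient f u) (gradient f xb) :=
      (sameRay_iff_inv_norm_smul_eq_of_ne hgu hgxb).2 hdir
    have hnonneg : 0 ≤ (inner ℝ (gradient f xb) (xb - u) : ℝ) := by
      rwa [← neg_sub, inner_neg_right, neg_nonneg]
    exact (hf.inner_gradient_neg (hdiff u (hSΓ huS)) (hSΓ huS) (hΓo.mem_nhds hxbΓ)
      (hC1.continuousOn.continuousAt (hΓo.mem_nhds hxbΓ)) hgu hlt).not_ge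
      (hray.inner_nonneg_of_inner_nonneg hgxb hnonneg)
end

section
/- Let Γ ⊆ ℝⁿ be open and convex, S ⊆ Γ convex, f : Γ → ℝ continuously differentiable and pseudoconvex on Γ. Let x̄ be a known global minimizer of f on S. Then S̄ = {x ∈ S | ⟨∇f(x̄), x − x̄⟩ ≤ 0 and ∃ p > 0 with ∇f(x) = p·∇f(x̄)}. -/
/-!
Both minimizers `x` and `x̄` are first-order stationary on `S`, so `⟪∇f x, x̄ - x⟫ ≥ 0`. By
pseudoconvexity `f ≥ f x = f x̄` on the half-space `{y ∈ Γ | ⟪∇f x, y - x⟫ ≥ 0}`, which contains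
`x̄`; hence `x̄` minimizes `f` there, and its first-order condition says that the half-space
`{v | ⟪∇f x, v⟫ ≥ 0}` lies in `{v | ⟪∇f x̄, v⟫ ≥ 0}`. Swapping the roles of `x` and `x̄` makes the two
half-spaces equal, so the gradients are positive multiples of each other. Conversely, that
relation together with `⟪∇f x̄, x - x̄⟫ ≤ 0` gives `⟪∇f x, x̄ - x⟫ ≥ 0`, and pseudoconvexity gives
`f x ≤ f x̄`.
-/

open InnerProductSpace Filter Set Topology

variable {E : Type*} [NormedAddCommGroup E] [InnerProductSpace ℝ E]

lemma exists_nonneg_smul_of_forall_inner_nonneg_imp {a b : E}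
    (h : ∀ v, 0 ≤ ⟪a, v⟫_ℝ → 0 ≤ ⟪b, v⟫_ℝ) : ∃ c : ℝ, 0 ≤ c ∧ b = c • a := by
  set c : ℝ := ⟪a, b⟫_ℝ / ‖a‖ ^ 2
  set w : E := b - c • a
  have haw : ⟪a, w⟫_ℝ = 0 := by
    rcases eq_or_ne a 0 with rfl | ha
    · simp
    · simp only [w, c, inner_sub_right, real_inner_smul_right, real_inner_self_eq_norm_sq]
      field_simp
      ring
  have hbw : ⟪b, w⟫_ℝ = ‖w‖ ^ 2 := by
    rw [← real_inner_self_eq_norm_sq, show b = w + c • a by simp [w], inner_add_left,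
      real_inner_smul_left, haw, mul_zero, add_zero]
  -- `w ⊥ a`, so both `w` and `-w` are admissible test vectors.
  have hw : w = 0 := by
    have h₁ := h w haw.ge
    have h₂ := h (-w) (by rw [inner_neg_right, haw, neg_zero])
    rw [inner_neg_right] at h₂
    exact norm_eq_zero.mp (pow_eq_zero_iff two_ne_zero |>.mp (by linarith))
  refine ⟨c, div_nonneg ?_ (sq_nonneg _), (sub_eq_zero.mp hw)⟩
  simpa [real_inner_comm, real_inner_self_eq_norm_sq] using h a (by
    rw [real_inner_self_eq_norm_sq]; positivity)

lemma exists_pos_smul_of_forall_inner_nonneg_iff {a b : E}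
    (h : ∀ v, 0 ≤ ⟪a, v⟫_ℝ ↔ 0 ≤ ⟪b, v⟫_ℝ) : ∃ p : ℝ, 0 < p ∧ a = p • b := by
  obtain ⟨c, hc, hb⟩ := exists_nonneg_smul_of_forall_inner_nonneg_imp fun v => (h v).mp
  obtain ⟨d, hd, ha⟩ := exists_nonneg_smul_of_forall_inner_nonneg_imp fun v => (h v).mpr
  rcases eq_or_ne b 0 with rfl | hb0
  · exact ⟨1, one_pos, by simpa using ha⟩
  have hcd : c * d = 1 := by
    have : (c * d) • b = (1 : ℝ) • b := by rw [mul_smul, ← ha, ← hb, one_smul]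
    exact smul_left_injective ℝ hb0 this
  exact ⟨d, lt_of_le_of_ne hd (by rintro rfl; simp at hcd), ha⟩

variable [CompleteSpace E]

lemma IsMinOn.inner_gradient_nonneg {f : E → ℝ} {s : Set E} {x v : E} (hmin : IsMinOn f s x)
    (hf : DifferentiableAt ℝ f x) (hv : v ∈ posTangentConeAt s x) :
    0 ≤ ⟪gradient f x, v⟫_ℝ :=
  hmin.localize.hasFDerivWithinAt_nonneg hf.hasGradientAt.hasFDerivAt.hasFDerivWithinAt hv

lemma IsMinOn.inner_gradient_sub_nonneg {f : E → ℝ} {s : Set E} {x y : E} (hs : Convex ℝ s)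
    (hx : x ∈ s) (hy : y ∈ s) (hmin : IsMinOn f s x) (hf : DifferentiableAt ℝ f x) :
    0 ≤ ⟪gradient f x, y - x⟫_ℝ :=
  hmin.inner_gradient_nonneg hf (sub_mem_posTangentConeAt_of_segment_subset (hs.segment_subset hx hy))

def PseudoconvexOn (s : Set E) (f : E → ℝ) : Prop :=
  ∀ x ∈ s, ∀ y ∈ s, f y < f x → ⟪gradient f x, y - x⟫_ℝ < 0

lemma PseudoconvexOn.le_of_inner_gradient_sub_nonneg {s : Set E} {f : E → ℝ}
    (hf : PseudoconvexOn s f) {x y : E} (hx : x ∈ s) (hy : y ∈ s)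
    (hxy : 0 ≤ ⟪gradient f x, y - x⟫_ℝ) : f x ≤ f y :=
  not_lt.mp fun hlt => (hf x hx y hy hlt).not_ge hxy

lemma PseudoconvexOn.inner_gradient_nonneg_of_isMinOn {Γ S : Set E} {f : E → ℝ}
    (hf : PseudoconvexOn Γ f) (hΓ : IsOpen Γ) (hS : Convex ℝ S) (hSΓ : S ⊆ Γ)
    (hdiff : ∀ z ∈ Γ, DifferentiableAt ℝ f z) {x z : E} (hx : x ∈ S) (hz : z ∈ S)
    (hxmin : IsMinOn f S x) (hzmin : IsMinOn f S z) {v : E} (hv : 0 ≤ ⟪gradient f x, v⟫_ℝ) :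
    0 ≤ ⟪gradient f z, v⟫_ℝ := by
  set H := {y ∈ Γ | 0 ≤ ⟪gradient f x, y - x⟫_ℝ}
  have hxz : 0 ≤ ⟪gradient f x, z - x⟫_ℝ :=
    hxmin.inner_gradient_sub_nonneg hS hx hz (hdiff x (hSΓ hx))
  have hzH : IsMinOn f H z := fun y hy =>
    le_trans (hzmin hx) (hf.le_of_inner_gradient_sub_nonneg (hSΓ hx) hy.1 hy.2)
  refine hzH.inner_gradient_nonneg (hdiff z (hSΓ hz)) (mem_posTangentConeAt_of_frequently_mem ?_)
  have hline : Tendsto (fun t : ℝ => z + t • v) (𝓝 0) (𝓝 z) :=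
    ((continuous_const.add (continuous_id.smul continuous_const)).tendsto' 0 z (by simp))
  refine Eventually.frequently ?_
  filter_upwards [nhdsWithin_le_nhds (hline.eventually (hΓ.mem_nhds (hSΓ hz))),
    self_mem_nhdsWithin] with t htΓ ht
  refine ⟨htΓ, ?_⟩
  rw [add_sub_right_comm, inner_add_right, real_inner_smul_right]
  exact add_nonneg hxz (mul_nonneg (le_of_lt ht) hv)

theorem stmt_15_general {n : ℕ} (Γ S : Set (EuclideanSpace ℝ (Fin n)))
    (hΓo : IsOpen Γ) (hS : Convex ℝ S) (hSΓ : S ⊆ Γ)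
    (f : EuclideanSpace ℝ (Fin n) → ℝ)
    (hC1 : ContDiffOn ℝ 1 f Γ)
    (hpc : ∀ x ∈ Γ, ∀ y ∈ Γ, f y < f x → (inner ℝ (gradient f x) (y - x) : ℝ) < 0)
    (Sbar : Set (EuclideanSpace ℝ (Fin n)))
    (hSbar : Sbar = {x ∈ S | ∀ y ∈ S, f x ≤ f y})
    (xb : EuclideanSpace ℝ (Fin n)) (hxb : xb ∈ Sbar) :
    Sbar = {x ∈ S | (inner ℝ (gradient f xb) (x - xb) : ℝ) ≤ 0 ∧
      ∃ p : ℝ, 0 < p ∧ gradient f x = p • gradient f xb} := by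
  subst hSbar
  obtain ⟨hxbS, hxbmin⟩ := hxb
  have hpc : PseudoconvexOn Γ f := hpc
  have hdiff z (hz : z ∈ Γ) : DifferentiableAt ℝ f z :=
    (hC1.differentiableOn one_ne_zero).differentiableAt (hΓo.mem_nhds hz)
  have hswap (x y : EuclideanSpace ℝ (Fin n)) : ⟪gradient f xb, x - y⟫_ℝ =
      -⟪gradient f xb, y - x⟫_ℝ := by rw [← inner_neg_right, neg_sub]
  ext x
  constructor
  · rintro ⟨hxS, hxmin⟩
    have hxmin : IsMinOn f S x := hxmin
    have hxbmin : IsMinOn f S xb := hxbmin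
    have key {y z v} (hy : y ∈ S) (hz : z ∈ S) (hymin : IsMinOn f S y) (hzmin : IsMinOn f S z) :
        0 ≤ ⟪gradient f y, v⟫_ℝ → 0 ≤ ⟪gradient f z, v⟫_ℝ :=
      hpc.inner_gradient_nonneg_of_isMinOn hΓo hS hSΓ hdiff hy hz hymin hzmin
    have hxb_toward_x := key hxS hxbS hxmin hxbmin
      (hxmin.inner_gradient_sub_nonneg hS hxS hxbS (hdiff x (hSΓ hxS)))
    refine ⟨hxS, by linarith [hswap x xb], exists_pos_smul_of_forall_inner_nonneg_iff
      fun v => ⟨key hxS hxbS hxmin hxbmin, key hxbS hxS hxbmin hxmin⟩⟩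
  · rintro ⟨hxS, hle, p, hp, hgrad⟩
    have hxxb : 0 ≤ ⟪gradient f x, xb - x⟫_ℝ := by
      rw [hgrad, real_inner_smul_left]
      exact mul_nonneg hp.le (by linarith [hswap x xb])
    exact ⟨hxS, fun y hy =>
      (hpc.le_of_inner_gradient_sub_nonneg (hSΓ hxS) (hSΓ hxbS) hxxb).trans (hxbmin y hy)⟩

theorem stmt_15 {n : ℕ} (Γ S : Set (EuclideanSpace ℝ (Fin n)))
    (hΓo : IsOpen Γ) (hΓ : Convex ℝ Γ) (hS : Convex ℝ S) (hSΓ : S ⊆ Γ)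
    (f : EuclideanSpace ℝ (Fin n) → ℝ)
    (hC1 : ContDiffOn ℝ 1 f Γ)
    (hpc : ∀ x ∈ Γ, ∀ y ∈ Γ, f y < f x → (inner ℝ (gradient f x) (y - x) : ℝ) < 0)
    (Sbar : Set (EuclideanSpace ℝ (Fin n)))
    (hSbar : Sbar = {x ∈ S | ∀ y ∈ S, f x ≤ f y})
    (xb : EuclideanSpace ℝ (Fin n)) (hxb : xb ∈ Sbar) :
    Sbar = {x ∈ S | (inner ℝ (gradient f xb) (x - xb) : ℝ) ≤ 0 ∧
      ∃ p : ℝ, 0 < p ∧ gradient f x = p • gradient f xb} :=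
  stmt_15_general Γ S hΓo hS hSΓ f hC1 hpc Sbar hSbar xb hxb
end
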